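/- Optimal vertex-restricted simplifications with vertex-injective warpings exist: let (X,ρ) be a metric space, let p ∈ [1,∞), let ℓ ≥ 2, let π ∈ X^m be a point sequence and let P be its set of vertices. Then there exists a point sequence π'' of complexity at most ℓ with all vertices in P such that dtw_p(π, π'') = min over σ of complexity at most ℓ with vertices in P of dtw_p(π, σ), and such that some optimal p-warping W between π and π'' contains no two pairs (t₁, t₂) and (t₁, t₂+1); i.e., no two distinct vertices of π'' are matched with the same vertex of π by W. -/

import Mathlib

/-!
Among the sequences with vertices in `π` and complexity at most `ℓ` that minimize `dtw_p(π, ·)`,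
take one of minimal complexity, and among its optimal warpings one of minimal length. Suppose the
warping contains a vertical step and consider the last one, `(i, j) → (i, j + 1)`. If the next pair
is `(i + 1, j + 1)`, or if the step ends the warping with `j = 0` (so the pair before it is
`(i - 1, 0)`), the middle pair of the corner can be dropped: this is a shorter warping of no larger
cost. Otherwise `(i, j + 1)` is the only pair matched with vertex `j + 1` of the simplification;
deleting that vertex and that pair gives a shorter simplification whose `dtw_p` to `π` is no larger.
-/

open scoped BigOperators

/-- An `(m₁, m₂)`-warping (with 0-based indices): a sequence of index pairs starting at
`(0,0)`, ending at `(m₁-1, m₂-1)`, whose consecutive increments lie in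
`{(0,1), (1,0), (1,1)}`. -/
def IsWarping (m₁ m₂ : ℕ) (W : List (ℕ × ℕ)) : Prop :=
  W ≠ [] ∧ W.head? = some (0, 0) ∧ W.getLast? = some (m₁ - 1, m₂ - 1) ∧
    ∀ k, k + 1 < W.length →
      W.getD (k + 1) (0, 0) = ((W.getD k (0, 0)).1, (W.getD k (0, 0)).2 + 1) ∨
      W.getD (k + 1) (0, 0) = ((W.getD k (0, 0)).1 + 1, (W.getD k (0, 0)).2) ∨
      W.getD (k + 1) (0, 0) = ((W.getD k (0, 0)).1 + 1, (W.getD k (0, 0)).2 + 1)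

/-- The cost `Σ_{(i,j) ∈ W} ρ(σ_i, τ_j)^p` of a warping `W`. -/
noncomputable def warpCost {X : Type*} [MetricSpace X] [Inhabited X]
    (p : ℝ) (σ τ : List X) (W : List (ℕ × ℕ)) : ℝ :=
  (W.map fun ij => dist (σ.getD ij.1 default) (τ.getD ij.2 default) ^ p).sum

/-- The `p`-dynamic time warping distance between two point sequences. -/
noncomputable def dtw {X : Type*} [MetricSpace X] [Inhabited X] (p : ℝ) (σ τ : List X) : ℝ :=
  sInf { c : ℝ | ∃ W, IsWarping σ.length τ.length W ∧ c = warpCost p σ τ W ^ (1 / p) }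

/-- `cost_p^q(T, c) = Σ_{τ ∈ T} dtw_p(c, τ)^q`. -/
noncomputable def dtwCost {X : Type*} [MetricSpace X] [Inhabited X]
    (p q : ℝ) (T : Finset (List X)) (c : List X) : ℝ :=
  ∑ τ ∈ T, dtw p c τ ^ q

/-- `σ` is a point sequence of complexity at most `ℓ`, i.e. `σ ∈ X^{≤ℓ}`. -/
def SeqLE {X : Type*} (ℓ : ℕ) (σ : List X) : Prop := 2 ≤ σ.length ∧ σ.length ≤ ℓ

/-- `W` is an optimal `p`-warping between `σ` and `τ`. -/
def IsOptWarping {X : Type*} [MetricSpace X] [Inhabited X]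
    (p : ℝ) (σ τ : List X) (W : List (ℕ × ℕ)) : Prop :=
  IsWarping σ.length τ.length W ∧
    ∀ W', IsWarping σ.length τ.length W' → warpCost p σ τ W ≤ warpCost p σ τ W'

theorem Set.Finite.exists_min_image_with_tiebreak {α β γ : Type*} [LinearOrder β] [LinearOrder γ]
    {S : Set α} (hS : S.Finite) (hne : S.Nonempty) (f : α → β) (g : α → γ) :
    ∃ a ∈ S, (∀ b ∈ S, f a ≤ f b) ∧ ∀ b ∈ S, f b ≤ f a → g a ≤ g b := by
  obtain ⟨a₀, ha₀, hmin⟩ := Set.exists_min_image S f hS hne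
  obtain ⟨a, ⟨ha, hfa⟩, hg⟩ := Set.exists_min_image {b ∈ S | f b ≤ f a₀} g
    (hS.subset fun _ h => h.1) ⟨a₀, ha₀, le_rfl⟩
  exact ⟨a, ha, fun b hb => hfa.trans (hmin b hb), fun b hb hfb => hg b ⟨hb, hfb.trans hfa⟩⟩

theorem finite_setOf_length_le_forall_mem {α : Type*} {s : Set α} (hs : s.Finite) (n : ℕ) :
    {l : List α | l.length ≤ n ∧ ∀ x ∈ l, x ∈ s}.Finite := by
  have := hs.to_subtype
  refine ((List.finite_length_le s n).image (List.map Subtype.val)).subset ?_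
  rintro l ⟨hlen, hmem⟩
  exact ⟨l.pmap Subtype.mk hmem, by simpa using hlen, by simp [List.map_pmap]⟩

theorem List.exists_eq_append_cons_cons_rel_forall_not_rel {α : Type*} {R : α → α → Prop}
    (A : List α) {x y : α} (B : List α) (hxy : R x y) :
    ∃ A' x' y' B', A ++ x :: y :: B = A' ++ x' :: y' :: B' ∧ R x' y' ∧ ∀ z ∈ B'.head?, ¬R y' z := by
  induction B generalizing A x y with
  | nil => exact ⟨A, x, y, [], rfl, hxy, by simp⟩
  | cons z B ih =>
    by_cases hyz : R y z
    · obtain ⟨A', x', y', B', h, h'⟩ := ih (A ++ [x]) hyz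
      exact ⟨A', x', y', B', by simpa using h, h'⟩
    · exact ⟨A, x, y, z :: B, rfl, hxy, by simpa using hyz⟩

def WarpStep (a b : ℕ × ℕ) : Prop :=
  b = (a.1, a.2 + 1) ∨ b = (a.1 + 1, a.2) ∨ b = (a.1 + 1, a.2 + 1)

theorem WarpStep.lt {a b : ℕ × ℕ} (h : WarpStep a b) : a < b := by
  obtain ⟨a₁, a₂⟩ := a
  rcases h with rfl | rfl | rfl <;> simp [Prod.lt_iff]

theorem WarpStep.lower {a b : ℕ × ℕ} (h : WarpStep a b) (ha : 1 ≤ a.2) :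
    WarpStep (a.1, a.2 - 1) (b.1, b.2 - 1) := by
  obtain ⟨a₁, a₂⟩ := a
  rcases h with rfl | rfl | rfl <;> simp [WarpStep] <;> omega

theorem pairwise_lt_of_isChain_warpStep {W : List (ℕ × ℕ)} (hW : W.IsChain WarpStep) :
    W.Pairwise (· < ·) :=
  List.isChain_iff_pairwise.1 (hW.imp fun _ _ => WarpStep.lt)

theorem exists_eq_append_cons_cons_of_mem {W : List (ℕ × ℕ)} (hW : W.IsChain WarpStep) {a b : ℕ}
    (h₁ : (a, b) ∈ W) (h₂ : (a, b + 1) ∈ W) : ∃ A B, W = A ++ (a, b) :: (a, b + 1) :: B := by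
  induction W with
  | nil => simp at h₁
  | cons c W ih =>
    have hc : ∀ q ∈ W, c < q := (List.pairwise_cons.1 (pairwise_lt_of_isChain_warpStep hW)).1
    rcases List.mem_cons.1 h₁ with rfl | hmem₁
    · obtain ⟨d, W, rfl⟩ : ∃ d W', W = d :: W' := by
        cases W with
        | nil => simp at h₂
        | cons d W' => exact ⟨d, W', rfl⟩
      have hd : d ≤ (a, b + 1) := by
        rcases List.mem_cons.1 (List.mem_of_ne_of_mem (by simp) h₂) with h | h
        · exact h.ge
        · exact ((List.pairwise_cons.1 (pairwise_lt_of_isChain_warpStep hW.tail)).1 _ h).le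
      refine ⟨[], W, ?_⟩
      rcases List.isChain_cons_cons.1 hW |>.1 with rfl | rfl | rfl <;>
        simp_all [Prod.mk_le_mk]
    · have hmem₂ : (a, b + 1) ∈ W := by
        refine List.mem_of_ne_of_mem ?_ h₂
        rintro rfl
        simpa [Prod.lt_iff] using hc _ hmem₁
      obtain ⟨A, B, rfl⟩ := ih hW.tail hmem₁ hmem₂
      exact ⟨c :: A, B, rfl⟩

theorem isWarping_iff {m₁ m₂ : ℕ} {W : List (ℕ × ℕ)} :
    IsWarping m₁ m₂ W ↔
      W.head? = some (0, 0) ∧ W.getLast? = some (m₁ - 1, m₂ - 1) ∧ W.IsChain WarpStep := by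
  have hchain : W.IsChain WarpStep ↔ ∀ k, k + 1 < W.length →
      W.getD (k + 1) (0, 0) = ((W.getD k (0, 0)).1, (W.getD k (0, 0)).2 + 1) ∨
      W.getD (k + 1) (0, 0) = ((W.getD k (0, 0)).1 + 1, (W.getD k (0, 0)).2) ∨
      W.getD (k + 1) (0, 0) = ((W.getD k (0, 0)).1 + 1, (W.getD k (0, 0)).2 + 1) := by
    rw [List.isChain_iff_getElem]
    refine forall_congr' fun k => ⟨fun h hk => ?_, fun h hk => ?_⟩
    · rw [List.getD_eq_getElem _ _ (Nat.lt_of_succ_lt hk), List.getD_eq_getElem _ _ hk]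
      exact h hk
    · have := h hk
      rwa [List.getD_eq_getElem _ _ (Nat.lt_of_succ_lt hk), List.getD_eq_getElem _ _ hk] at this
  rw [IsWarping, hchain]
  exact ⟨fun h => h.2, fun h => ⟨by rintro rfl; simp at h, h⟩⟩

section Warping

variable {m₁ m₂ : ℕ} {W : List (ℕ × ℕ)}

theorem IsWarping.isChain (hW : IsWarping m₁ m₂ W) : W.IsChain WarpStep :=
  (isWarping_iff.1 hW).2.2

theorem IsWarping.pairwise_lt (hW : IsWarping m₁ m₂ W) : W.Pairwise (· < ·) :=
  pairwise_lt_of_isChain_warpStep hW.isChain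

theorem IsWarping.le_of_mem (hW : IsWarping m₁ m₂ W) {q : ℕ × ℕ} (hq : q ∈ W) :
    q ≤ (m₁ - 1, m₂ - 1) := by
  obtain ⟨V, rfl⟩ := List.getLast?_eq_some_iff.1 (isWarping_iff.1 hW).2.1
  simpa using (hW.pairwise_lt.imp le_of_lt).rel_getLast hq

theorem finite_setOf_isWarping (m₁ m₂ : ℕ) : {W | IsWarping m₁ m₂ W}.Finite := by
  let s := Finset.Iic (m₁ - 1, m₂ - 1)
  refine (finite_setOf_length_le_forall_mem s.finite_toSet s.card).subset fun W hW => ?_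
  have hsub : ∀ q ∈ W, q ∈ s := fun q hq => Finset.mem_Iic.2 (hW.le_of_mem hq)
  refine ⟨?_, hsub⟩
  rw [← List.toFinset_card_of_nodup hW.pairwise_lt.nodup]
  exact Finset.card_le_card fun q hq => hsub q (List.mem_toFinset.1 hq)

theorem IsWarping.concat (hW : IsWarping m₁ m₂ W) {q : ℕ × ℕ} (hq : WarpStep (m₁ - 1, m₂ - 1) q) :
    IsWarping (q.1 + 1) (q.2 + 1) (W ++ [q]) := by
  obtain ⟨hhead, hlast, hchain⟩ := isWarping_iff.1 hW
  refine isWarping_iff.2 ⟨?_, by simp, hchain.append (List.isChain_singleton q) ?_⟩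
  · rw [List.head?_append, hhead]; rfl
  · simpa [hlast] using hq

theorem exists_isWarping {m₁ m₂ : ℕ} (h₁ : 1 ≤ m₁) (h₂ : 1 ≤ m₂) : ∃ W, IsWarping m₁ m₂ W := by
  induction m₁, h₁ using Nat.le_induction with
  | base =>
    induction m₂, h₂ using Nat.le_induction with
    | base => exact ⟨[(0, 0)], isWarping_iff.2 ⟨rfl, rfl, List.isChain_singleton _⟩⟩
    | succ n hn ih =>
      obtain ⟨W, hW⟩ := ih
      exact ⟨_, hW.concat (q := (0, n)) (Or.inl (by simp; omega))⟩
  | succ n hn ih =>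
    obtain ⟨W, hW⟩ := ih
    exact ⟨_, hW.concat (q := (n, m₂ - 1)) (Or.inr (Or.inl (by simp; omega)))⟩

variable {A B : List (ℕ × ℕ)} {x : ℕ × ℕ}

theorem IsWarping.cut_corner {b : ℕ × ℕ}
    (hW : IsWarping m₁ m₂ (A ++ x :: b :: (x.1 + 1, x.2 + 1) :: B)) :
    IsWarping m₁ m₂ (A ++ x :: (x.1 + 1, x.2 + 1) :: B) := by
  obtain ⟨hhead, hlast, hchain⟩ := isWarping_iff.1 hW
  refine isWarping_iff.2 ⟨by simpa using hhead, by simpa using hlast, ?_⟩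
  simp only [List.isChain_append, List.isChain_cons_cons] at hchain ⊢
  refine ⟨hchain.1, ⟨Or.inr (Or.inr rfl), hchain.2.1.2.2⟩, ?_⟩
  simpa using hchain.2.2

theorem IsWarping.erase_column (hW : IsWarping m₁ m₂ (A ++ x :: (x.1, x.2 + 1) :: B)) :
    IsWarping m₁ (m₂ - 1) (A ++ x :: B.map fun q => (q.1, q.2 - 1)) := by
  set y : ℕ × ℕ := (x.1, x.2 + 1)
  have hx : x :: B.map (fun q => (q.1, q.2 - 1)) = (y :: B).map fun q => (q.1, q.2 - 1) := by
    simp [y]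
  obtain ⟨hhead, hlast, hchain⟩ := isWarping_iff.1 hW
  rw [hx]
  refine isWarping_iff.2 ⟨by simpa [y] using hhead, ?_, ?_⟩
  · rw [show A ++ x :: y :: B = (A ++ [x]) ++ y :: B by simp,
      List.getLast?_append_of_ne_nil _ (List.cons_ne_nil _ _)] at hlast
    rw [List.getLast?_append_of_ne_nil _ (by simp), List.getLast?_map, hlast]
    rfl
  · rw [show A ++ x :: y :: B = A ++ (x :: y :: B) by simp] at hchain
    obtain ⟨hA, hxB, hjoin⟩ := List.isChain_append.1 hchain
    have hyB := hxB.tail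
    refine List.isChain_append.2 ⟨hA, (List.isChain_map _).2 ?_, by simpa [y] using hjoin⟩
    have hlt := pairwise_lt_of_isChain_warpStep hyB
    refine hyB.imp_of_mem_imp fun a b ha _ hab => hab.lower ?_
    rcases List.mem_cons.1 ha with rfl | ha
    · simp [y]
    · have := (List.pairwise_cons.1 hlt).1 a ha
      simp [Prod.lt_iff, y] at this
      omega

end Warping

section Cost

variable {X : Type*} [MetricSpace X] [Inhabited X] {p : ℝ} {σ τ : List X}

theorem warpCost_mono {V W : List (ℕ × ℕ)} (h : V.Sublist W) :
    warpCost p σ τ V ≤ warpCost p σ τ W :=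
  (h.map _).sum_le_sum fun _ hc => by
    obtain ⟨_, _, rfl⟩ := List.mem_map.1 hc
    exact Real.rpow_nonneg dist_nonneg p

theorem warpCost_nonneg (W : List (ℕ × ℕ)) : 0 ≤ warpCost p σ τ W :=
  warpCost_mono (List.nil_sublist W)

theorem warpCost_eraseIdx (j : ℕ) {V W : List (ℕ × ℕ)} (hV : ∀ q ∈ V, q.2 < j)
    (hW : ∀ q ∈ W, j < q.2) :
    warpCost p σ (τ.eraseIdx j) (V ++ W.map fun q => (q.1, q.2 - 1)) =
      warpCost p σ τ (V ++ W) := by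
  simp only [warpCost, List.map_append, List.sum_append, List.map_map]
  congr 1 <;> congr 1 <;> refine List.map_congr_left fun q hq => ?_
  · have := hV q hq
    simp [List.getD_eq_getElem?_getD, List.getElem?_eraseIdx, this]
  · have := hW q hq
    simp [List.getD_eq_getElem?_getD, List.getElem?_eraseIdx,
      Nat.sub_add_cancel (by omega : 1 ≤ q.2), show ¬ q.2 - 1 < j by omega]

theorem dtw_le_of_isWarping {W : List (ℕ × ℕ)} (hW : IsWarping σ.length τ.length W) :
    dtw p σ τ ≤ warpCost p σ τ W ^ (1 / p) :=
  csInf_le ⟨0, by rintro _ ⟨V, -, rfl⟩; exact Real.rpow_nonneg (warpCost_nonneg V) _⟩ ⟨W, hW, rfl⟩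

theorem IsOptWarping.dtw_eq (hp : 0 ≤ p) {W : List (ℕ × ℕ)} (hW : IsOptWarping p σ τ W) :
    dtw p σ τ = warpCost p σ τ W ^ (1 / p) := by
  refine le_antisymm (dtw_le_of_isWarping hW.1) (le_csInf ⟨_, W, hW.1, rfl⟩ ?_)
  rintro _ ⟨V, hV, rfl⟩
  exact Real.rpow_le_rpow (warpCost_nonneg W) (hW.2 V hV) (by positivity)

theorem IsOptWarping.dtw_le_of_warpCost_le (hp : 0 ≤ p) {W : List (ℕ × ℕ)}
    (hW : IsOptWarping p σ τ W) {τ' : List X} {W' : List (ℕ × ℕ)}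
    (hW' : IsWarping σ.length τ'.length W') (hcost : warpCost p σ τ' W' ≤ warpCost p σ τ W) :
    dtw p σ τ' ≤ dtw p σ τ :=
  (dtw_le_of_isWarping hW').trans <| (hW.dtw_eq hp).symm ▸
    Real.rpow_le_rpow (warpCost_nonneg W') hcost (by positivity)

theorem IsOptWarping.of_sublist {W V : List (ℕ × ℕ)} (hW : IsOptWarping p σ τ W)
    (hV : IsWarping σ.length τ.length V) (hVW : V.Sublist W) : IsOptWarping p σ τ V :=
  ⟨hV, fun U hU => (warpCost_mono hVW).trans (hW.2 U hU)⟩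

theorem exists_isOptWarping_forall_length_le (p : ℝ) (h₁ : 1 ≤ σ.length) (h₂ : 1 ≤ τ.length) :
    ∃ W, IsOptWarping p σ τ W ∧ ∀ W', IsOptWarping p σ τ W' → W.length ≤ W'.length := by
  obtain ⟨W, hW, hmin, hlen⟩ :=
    (finite_setOf_isWarping σ.length τ.length).exists_min_image_with_tiebreak
      (exists_isWarping h₁ h₂) (warpCost p σ τ) List.length
  exact ⟨W, ⟨hW, hmin⟩, fun W' hW' => hlen W' hW'.1 (hW'.2 W hW)⟩

end Cost

section Optimal

variable {X : Type*} [MetricSpace X] [Inhabited X] {p : ℝ} {σ τ : List X}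
  {A B : List (ℕ × ℕ)} {x : ℕ × ℕ}

theorem IsOptWarping.cut_corner {b : ℕ × ℕ}
    (hW : IsOptWarping p σ τ (A ++ x :: b :: (x.1 + 1, x.2 + 1) :: B)) :
    IsOptWarping p σ τ (A ++ x :: (x.1 + 1, x.2 + 1) :: B) :=
  hW.of_sublist hW.1.cut_corner (by simp)

theorem IsOptWarping.exists_sublist_dtw_le (hp : 0 ≤ p) (hτ : 3 ≤ τ.length)
    (hW : IsOptWarping p σ τ (A ++ x :: (x.1, x.2 + 1) :: B)) (hB : ∀ q ∈ B, x.2 + 1 < q.2) :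
    ∃ τ', τ'.Sublist τ ∧ 2 ≤ τ'.length ∧ τ'.length < τ.length ∧ dtw p σ τ' ≤ dtw p σ τ := by
  have hj : x.2 + 1 < τ.length := by
    have := hW.1.le_of_mem (q := (x.1, x.2 + 1)) (by simp)
    simp only [Prod.mk_le_mk] at this
    omega
  have hA : ∀ q ∈ A ++ [x], q.2 < x.2 + 1 := by
    have hlt := (List.pairwise_append.1 hW.1.pairwise_lt).2.2
    simp only [List.mem_append, List.mem_singleton]
    rintro q (hq | rfl)
    · have := hlt q hq x (by simp)
      simp only [Prod.lt_iff] at this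
      omega
    · omega
  refine ⟨_, τ.eraseIdx_sublist (x.2 + 1), by rw [List.length_eraseIdx_of_lt hj]; omega,
    by rw [List.length_eraseIdx_of_lt hj]; omega, ?_⟩
  refine hW.dtw_le_of_warpCost_le hp (W' := A ++ x :: B.map fun q => (q.1, q.2 - 1)) ?_ ?_
  · rw [List.length_eraseIdx_of_lt hj]
    exact hW.1.erase_column
  · calc warpCost p σ (τ.eraseIdx (x.2 + 1)) (A ++ x :: B.map fun q => (q.1, q.2 - 1))
        = warpCost p σ τ (A ++ [x] ++ B) := by simpa using warpCost_eraseIdx (x.2 + 1) hA hB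
      _ ≤ _ := warpCost_mono (by simp)

theorem IsOptWarping.exists_shorter_of_final_vertical_step (hp : 0 ≤ p) (hσ : 2 ≤ σ.length)
    (hW : IsOptWarping p σ τ (A ++ [x, (x.1, x.2 + 1)])) :
    (∃ W', IsOptWarping p σ τ W' ∧ W'.length < (A ++ [x, (x.1, x.2 + 1)]).length) ∨
      ∃ τ', τ'.Sublist τ ∧ 2 ≤ τ'.length ∧ τ'.length < τ.length ∧ dtw p σ τ' ≤ dtw p σ τ := by
  obtain ⟨hhead, hlast, hchain⟩ := isWarping_iff.1 hW.1
  obtain ⟨x₁, x₂⟩ := x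
  simp only [List.getLast?_append, List.getLast?_cons_cons, List.getLast?_singleton,
    Option.some_or, Option.some.injEq, Prod.mk.injEq] at hlast
  rcases Nat.eq_zero_or_pos x₂ with rfl | hx₂
  · left
    rcases List.eq_nil_or_concat' A with rfl | ⟨A, r, rfl⟩
    · simp at hhead
      omega
    have hr : WarpStep r (x₁, 0) := by
      simp only [List.append_assoc, List.singleton_append] at hchain
      exact (List.isChain_cons_cons.1 hchain.right_of_append).1
    obtain ⟨r₁, r₂⟩ := r
    rcases hr with h | h | h <;> simp only [Prod.ext_iff] at h
    · omega
    · obtain ⟨rfl, rfl⟩ : x₁ = r₁ + 1 ∧ 0 = r₂ := h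
      have hW' : IsOptWarping p σ τ (A ++ (r₁, 0) :: (r₁ + 1, 0) :: (r₁ + 1, 0 + 1) :: []) := by
        simpa using hW
      exact ⟨_, hW'.cut_corner, by simp⟩
    · omega
  · exact Or.inr (hW.exists_sublist_dtw_le hp (by omega) (by simp))

theorem IsOptWarping.exists_shorter_of_vertical_step (hp : 0 ≤ p) (hσ : 2 ≤ σ.length)
    (hW : IsOptWarping p σ τ (A ++ x :: (x.1, x.2 + 1) :: B))
    (hB : ∀ s ∈ B.head?, s ≠ (x.1, x.2 + 2)) :
    (∃ W', IsOptWarping p σ τ W' ∧ W'.length < (A ++ x :: (x.1, x.2 + 1) :: B).length) ∨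
      ∃ τ', τ'.Sublist τ ∧ 2 ≤ τ'.length ∧ τ'.length < τ.length ∧ dtw p σ τ' ≤ dtw p σ τ := by
  rcases B with _ | ⟨s, B⟩
  · exact hW.exists_shorter_of_final_vertical_step hp hσ
  obtain ⟨x₁, x₂⟩ := x
  have hs : WarpStep (x₁, x₂ + 1) s :=
    (List.isChain_cons_cons.1 hW.1.isChain.right_of_append.tail).1
  rcases hs with rfl | rfl | rfl
  · exact absurd rfl (hB _ rfl)
  · exact Or.inl ⟨_, hW.cut_corner, by simp⟩
  · right
    have hlt := List.pairwise_cons.1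
      (hW.1.pairwise_lt.sublist (List.sublist_append_right A _)).tail.tail
    have hB' : ∀ q ∈ (x₁ + 1, x₂ + 1 + 1) :: B, x₂ + 1 < q.2 := by
      rintro q hq
      rcases List.mem_cons.1 hq with rfl | hq
      · simp
      · have := hlt.1 q hq
        simp only [Prod.lt_iff] at this
        omega
    have := Prod.mk_le_mk.1 (hW.1.le_of_mem (q := (x₁ + 1, x₂ + 1 + 1)) (by simp))
    exact hW.exists_sublist_dtw_le hp (by omega) hB'

end Optimal

theorem IsOptWarping.not_mem_and_mem_of_minimal {X : Type*} [MetricSpace X] [Inhabited X]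
    {p : ℝ} {σ τ : List X} {W : List (ℕ × ℕ)} (hp : 0 ≤ p) (hσ : 2 ≤ σ.length)
    (hW : IsOptWarping p σ τ W) (hWmin : ∀ W', IsOptWarping p σ τ W' → W.length ≤ W'.length)
    (hτmin : ∀ τ', τ'.Sublist τ → 2 ≤ τ'.length → τ'.length < τ.length → dtw p σ τ < dtw p σ τ')
    (t₁ t₂ : ℕ) : ¬((t₁, t₂) ∈ W ∧ (t₁, t₂ + 1) ∈ W) := by
  rintro ⟨h₁, h₂⟩
  obtain ⟨A₀, B₀, rfl⟩ := exists_eq_append_cons_cons_of_mem hW.1.isChain h₁ h₂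
  obtain ⟨A, x, y, B, hWeq, rfl, hB⟩ :=
    List.exists_eq_append_cons_cons_rel_forall_not_rel (R := fun a b => b = (a.1, a.2 + 1))
      A₀ B₀ rfl
  rw [hWeq] at hW hWmin
  rcases hW.exists_shorter_of_vertical_step hp hσ (fun s hs h => hB s hs (by simp [h])) with
    ⟨W', hW', hlt⟩ | ⟨τ', hsub, h2, hlt, hle⟩
  · exact (hWmin W' hW').not_gt hlt
  · exact (hτmin τ' hsub h2 hlt).not_ge hle

/-- **Optimal vertex-restricted simplifications with vertex-injective warpings exist**
(claim in Lemma `lemma:simplificationcorrectness1`): there is a point sequence `π''` of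
complexity at most `ℓ` with vertices among those of `π`, minimizing `dtw_p(π,·)` among all
such sequences, and admitting an optimal `p`-warping that never matches two distinct
vertices of `π''` with the same vertex of `π` (i.e. contains no pairs `(t₁,t₂)` and
`(t₁,t₂+1)` simultaneously). -/
theorem exists_optimal_vertex_restricted_simplification_injective_warping
    {X : Type*} [MetricSpace X] [Inhabited X]
    (p : ℝ) (hp : 1 ≤ p) (ℓ : ℕ) (hℓ : 2 ≤ ℓ)
    (π : List X) (hπ : 2 ≤ π.length) :
    ∃ π'' : List X, SeqLE ℓ π'' ∧ (∀ v ∈ π'', v ∈ π) ∧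
      (∀ σ : List X, SeqLE ℓ σ → (∀ v ∈ σ, v ∈ π) → dtw p π π'' ≤ dtw p π σ) ∧
      ∃ W : List (ℕ × ℕ), IsOptWarping p π π'' W ∧
        ∀ t₁ t₂ : ℕ, ¬((t₁, t₂) ∈ W ∧ (t₁, t₂ + 1) ∈ W) := by
  let S : Set (List X) := {σ | SeqLE ℓ σ ∧ ∀ v ∈ σ, v ∈ π}
  have hS : S.Finite :=
    (finite_setOf_length_le_forall_mem π.finite_toSet ℓ).subset fun σ hσ => ⟨hσ.1.2, hσ.2⟩
  have hne : S.Nonempty :=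
    ⟨[π[0], π[1]], ⟨⟨by simp, by simpa using hℓ⟩, by simp [List.getElem_mem]⟩⟩
  obtain ⟨π'', ⟨hπ'', hsub⟩, hmin, hshortest⟩ :=
    hS.exists_min_image_with_tiebreak hne (dtw p π) List.length
  obtain ⟨W, hW, hWmin⟩ := exists_isOptWarping_forall_length_le (σ := π) (τ := π'') p
    (by omega) (by have := hπ''.1; omega)
  refine ⟨π'', hπ'', hsub, fun σ hσ hσπ => hmin σ ⟨hσ, hσπ⟩, W, hW,
    hW.not_mem_and_mem_of_minimal (by linarith) hπ hWmin fun τ' hτ' h2 hlt => ?_⟩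
  by_contra! hle
  have hτ'S : τ' ∈ S := ⟨⟨h2, hτ'.length_le.trans hπ''.2⟩, fun v hv => hsub v (hτ'.subset hv)⟩
  exact (hshortest τ' hτ'S hle).not_gt hlt
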